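/- Let M, a, s be positive integers with M > 1 such that ∑_{i=0}^{M-1} (a+i)^2 = s^2, and suppose M = 24·m₁ + 1 for a positive integer m₁. Then for every prime p > 3 with p ≡ 3 (mod 4), there do not exist integers i ≥ 0 and q ≥ 1 with p ∤ q such that 24·m₁ + 2 = p^(2i+1)·q; equivalently, the exact power of p dividing M + 1 is even. -/

import Mathlib

/-!
For `M = 24 m₁ + 1` the sum of squares factors as `s² = M (c² + 2 m₁ (M + 1))` with
`c = a + 12 m₁`. Let `p ≡ 3 (mod 4)` divide `M + 1` to an odd power. As `M ≡ -1 (mod p)`,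
the equation gives `s² + c² ≡ 0 (mod p)`, and as `-1` is not a square mod `p`, both `s` and `c` are
divisible by `p`. Dividing by `p²` lowers the exponent of `p` in the second summand by two, so
eventually it is `1`; then `p ∣ M · B` with `p ∤ B` and `p ∤ M`, a contradiction.
-/

open Finset

theorem six_mul_sum_range_add_sq (a m : ℕ) :
    6 * ∑ i ∈ range (m + 1), (a + i) ^ 2
      = (m + 1) * (6 * a ^ 2 + 6 * a * m + m * (2 * m + 1)) := by
  induction m with
  | zero => simp
  | succ n ih =>
    rw [sum_range_succ, Nat.mul_add, ih]
    ring

theorem sum_range_twentyfour_mul_add_one_add_sq (a k : ℕ) :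
    ∑ i ∈ range (24 * k + 1), (a + i) ^ 2
      = (24 * k + 1) * ((a + 12 * k) ^ 2 + 2 * k * (24 * k + 2)) := by
  have h := six_mul_sum_range_add_sq a (24 * k)
  refine Nat.eq_of_mul_eq_mul_left (show 0 < 6 by norm_num) ?_
  rw [h]
  ring

theorem Nat.Prime.dvd_of_dvd_sq_add_sq {p x y : ℕ} (hp : p.Prime) (hp4 : p % 4 = 3)
    (h : p ∣ x ^ 2 + y ^ 2) : p ∣ x ∧ p ∣ y := by
  have := Fact.mk hp
  have hy : p ∣ y := by
    by_contra hy
    have hy0 : (y : ZMod p) ≠ 0 := by rwa [Ne, ZMod.natCast_eq_zero_iff]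
    have hxy : (x : ZMod p) ^ 2 = -(y : ZMod p) ^ 2 := by
      have := (ZMod.natCast_eq_zero_iff _ p).mpr h
      push_cast at this
      linear_combination this
    exact ZMod.mod_four_ne_three_of_sq_eq_neg_sq' hy0 hxy hp4
  refine ⟨hp.dvd_of_dvd_pow (n := 2) ?_, hy⟩
  exact (Nat.dvd_add_left (dvd_pow hy two_ne_zero)).mp h

theorem dvd_and_dvd_of_sq_eq_mul_sq_add {p M s c T : ℕ} (hp : p.Prime) (hp4 : p % 4 = 3)
    (hpM : p ∣ M + 1) (hT : p ∣ T) (h : s ^ 2 = M * (c ^ 2 + T)) : p ∣ s ∧ p ∣ c := by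
  refine hp.dvd_of_dvd_sq_add_sq hp4 ?_
  have : s ^ 2 + c ^ 2 = (M + 1) * c ^ 2 + M * T := by rw [h]; ring
  rw [this]
  exact dvd_add (hpM.mul_right _) (hT.mul_left _)

theorem sq_ne_mul_sq_add_pow_mul {p M B : ℕ} (hp : p.Prime) (hp4 : p % 4 = 3)
    (hpM : p ∣ M + 1) (hB : ¬ p ∣ B) (i : ℕ) :
    ∀ s c : ℕ, s ^ 2 ≠ M * (c ^ 2 + p ^ (2 * i + 1) * B) := by
  induction i with
  | zero =>
    intro s c h
    obtain ⟨⟨s, rfl⟩, ⟨c, rfl⟩⟩ :=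
      dvd_and_dvd_of_sq_eq_mul_sq_add hp hp4 hpM (dvd_mul_of_dvd_left (by simp) B) h
    have h' : p * s ^ 2 = p * (M * c ^ 2) + M * B :=
      Nat.eq_of_mul_eq_mul_left hp.pos (by linear_combination h)
    have hMB : p ∣ M * B := (Nat.dvd_add_right (dvd_mul_right _ _)).mp (h' ▸ dvd_mul_right _ _)
    rcases hp.dvd_mul.mp hMB with hM | hB'
    · exact hp.one_lt.ne' (Nat.dvd_one.mp ((Nat.dvd_add_right hM).mp hpM))
    · exact hB hB'
  | succ i ih =>
    intro s c h
    obtain ⟨⟨s, rfl⟩, ⟨c, rfl⟩⟩ :=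
      dvd_and_dvd_of_sq_eq_mul_sq_add hp hp4 hpM
        (dvd_mul_of_dvd_left (dvd_pow_self p (by omega)) B) h
    refine ih s c (Nat.eq_of_mul_eq_mul_left (pow_pos hp.pos 2) ?_)
    linear_combination h

theorem stmt_general (M a s m₁ : ℕ)
    (hsum : ∑ i ∈ Finset.range M, (a + i) ^ 2 = s ^ 2)
    (hMeq : M = 24 * m₁ + 1) :
    ∀ p : ℕ, p.Prime → 3 < p → p % 4 = 3 →
      ¬ ∃ i q : ℕ, 1 ≤ q ∧ ¬ p ∣ q ∧ 24 * m₁ + 2 = p ^ (2 * i + 1) * q := by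
  rintro p hp - hp4 ⟨i, q, -, hpq, hq⟩
  subst hMeq
  have hpM : p ∣ 24 * m₁ + 1 + 1 := hq ▸ dvd_mul_of_dvd_left (dvd_pow_self p (by omega)) q
  have hp2 : ¬ p ∣ 2 * m₁ := by
    intro h
    have h2 : p ∣ 2 := (Nat.dvd_add_right (h.mul_left 12)).mp (by convert hpM using 1; ring)
    have := Nat.le_of_dvd two_pos h2
    omega
  refine sq_ne_mul_sq_add_pow_mul hp hp4 hpM (hp.not_dvd_mul hp2 hpq) i s (a + 12 * m₁) ?_
  rw [← hsum, sum_range_twentyfour_mul_add_one_add_sq, hq]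
  ring

theorem stmt (M a s m₁ : ℕ) (hM : 1 < M) (ha : 1 ≤ a) (hs : 1 ≤ s)
    (hsum : ∑ i ∈ Finset.range M, (a + i) ^ 2 = s ^ 2)
    (hm : 1 ≤ m₁) (hMeq : M = 24 * m₁ + 1) :
    ∀ p : ℕ, p.Prime → 3 < p → p % 4 = 3 →
      ¬ ∃ i q : ℕ, 1 ≤ q ∧ ¬ p ∣ q ∧ 24 * m₁ + 2 = p ^ (2 * i + 1) * q :=
  stmt_general M a s m₁ hsum hMeq
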